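/- For every nonnegative integer i and all real z, the Fourier transform of f(z) = e^{-πz²} L_i^{(α)}(πz²) is (-1)^i e^{-πk²} L_i^{(-i-α-1/2)}(πk²); that is, ∫_{-∞}^{∞} e^{-πz²} L_i^{(α)}(πz²) e^{-2πikz} dz = (-1)^i e^{-πk²} L_i^{(-i-α-1/2)}(πk²). -/

import Mathlib

/-!
Expanding `L_i^{(α)}(πz²)` in powers of `z²`, the transform is a combination of the transforms
of `z^{2j} e^{-πz²}`. Since `e^{-πz²}` is its own Fourier transform, multiplication by `z^{2j}`
becomes `2j`-fold differentiation, which produces `He_{2j}(√(2π) k) e^{-πk²}`. Re-expanding the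
even Hermite polynomials in powers of `πk²`, the coefficient of `(πk²)^t / t!` is the
Chu–Vandermonde convolution `Σ_s C(i+α, i-t-s) C(-t-1/2, s) = C(i+α-t-1/2, i-t)`, and the
reflection `C(-x, n) = (-1)^n C(x+n-1, n)` identifies it with the coefficient of
`(-1)^i L_i^{(-i-α-1/2)}(πk²)`.
-/

open Finset

/-- Generalized binomial coefficient C(x, k) = x(x-1)⋯(x-k+1)/k!. -/
noncomputable def gbinom (x : ℂ) (k : ℕ) : ℂ :=
  (∏ j ∈ Finset.range k, (x - j)) / (k.factorial : ℂ)

/-- Generalized Laguerre polynomial L_i^{(α)}(z) = Σ_{j=0}^i (-1)^j C(i+α, i-j) z^j / j!. -/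
noncomputable def lag (i : ℕ) (α z : ℂ) : ℂ :=
  ∑ j ∈ Finset.range (i + 1), (-1 : ℂ) ^ j * gbinom ((i : ℂ) + α) (i - j) * z ^ j / (j.factorial : ℂ)

open scoped Nat
open Real MeasureTheory FourierTransform Polynomial
open Complex (I)

lemma gbinom_eq_choose (x : ℂ) (k : ℕ) : gbinom x k = Ring.choose x k := by
  rw [Ring.choose_eq_smul, ← aeval_eq_smeval, ← eval_map_algebraMap,
    descPochhammer_map, descPochhammer_eval_eq_prod_range, gbinom, smul_eq_mul, div_eq_inv_mul]

lemma sum_range_gbinom_mul_gbinom (x y : ℂ) (n : ℕ) :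
    ∑ s ∈ range (n + 1), gbinom x s * gbinom y (n - s) = gbinom (x + y) n := by
  simp only [gbinom_eq_choose]
  rw [Ring.add_choose_eq n (Commute.all x y), Nat.sum_antidiagonal_eq_sum_range_succ_mk]

lemma gbinom_neg (x : ℂ) (n : ℕ) : gbinom (-x) n = (-1) ^ n * gbinom (x + n - 1) n := by
  rw [gbinom_eq_choose, gbinom_eq_choose, Ring.choose_neg, Int.negOnePow_def, Units.smul_def,
    zsmul_eq_mul]
  simp

lemma neg_one_pow_mul_gbinom_neg_sub_half_mul_factorial (t s : ℕ) :
    (-1) ^ s * gbinom (-t - 1 / 2) s * s ! = ∏ r ∈ range s, ((t : ℂ) + 1 / 2 + r) := by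
  have hneg : ∏ r ∈ range s, (-(t : ℂ) - 1 / 2 - r) =
      (-1) ^ s * ∏ r ∈ range s, ((t : ℂ) + 1 / 2 + r) := by
    rw [show (-1 : ℂ) ^ s = ∏ _r ∈ range s, (-1 : ℂ) by simp, ← prod_mul_distrib]
    exact prod_congr rfl fun r _ => by ring
  rw [gbinom, mul_assoc, div_mul_cancel₀ _ (by norm_cast; positivity), hneg, ← mul_assoc,
    ← mul_pow]
  norm_num

lemma prod_add_half_mul_factorial (t s : ℕ) :
    (∏ r ∈ range s, ((t : ℂ) + 1 / 2 + r)) * (4 ^ s * (2 * t)! * (t + s)!) =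
      (2 * (t + s))! * t ! := by
  induction s with
  | zero => simp
  | succ s ih =>
    rw [prod_range_succ, show 2 * (t + (s + 1)) = 2 * (t + s) + 1 + 1 by ring, ← add_assoc,
      Nat.factorial_succ (t + s), Nat.factorial_succ, Nat.factorial_succ]
    push_cast
    linear_combination (4 * ((t : ℂ) + s + 1 / 2) * ((t : ℂ) + s + 1)) * ih

lemma factorial_two_mul_eq_doubleFactorial_mul (s : ℕ) :
    (2 * s)! = (2 * s - 1)‼ * 2 ^ s * s ! := by
  cases s with
  | zero => rfl
  | succ s =>
    rw [show 2 * (s + 1) = 2 * s + 1 + 1 by ring, Nat.factorial_eq_mul_doubleFactorial,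
      show 2 * s + 1 + 1 = 2 * (s + 1) by ring, Nat.doubleFactorial_two_mul,
      show 2 * (s + 1) - 1 = 2 * s + 1 by omega]
    ring

-- The rescaled coefficient of `x^{2t}` in `He_{2(t+s)}` is a binomial coefficient at `-t-1/2`.
lemma doubleFactorial_mul_choose_div (t s : ℕ) :
    ((2 * s - 1)‼ * (2 * (t + s)).choose (2 * t) : ℂ) / (2 ^ s * (t + s)!) =
      (-1) ^ s * gbinom (-t - 1 / 2) s / t ! := by
  have hchoose : ((2 * s - 1)‼ * (2 * (t + s)).choose (2 * t) * (2 * t)! * 2 ^ s * s ! : ℂ) =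
      (2 * (t + s))! := by
    have h := Nat.choose_mul_factorial_mul_factorial (show 2 * t ≤ 2 * (t + s) by omega)
    rw [show 2 * (t + s) - 2 * t = 2 * s by omega, factorial_two_mul_eq_doubleFactorial_mul s] at h
    rw [← h]
    push_cast
    ring
  have hprod := prod_add_half_mul_factorial t s
  rw [← neg_one_pow_mul_gbinom_neg_sub_half_mul_factorial] at hprod
  have hfour : (4 : ℂ) ^ s = 2 ^ s * 2 ^ s := by rw [← mul_pow]; norm_num
  rw [div_eq_div_iff (by norm_cast; positivity) (by norm_cast; positivity)]
  apply mul_right_cancel₀ (show ((2 * t)! * 2 ^ s * s ! : ℂ) ≠ 0 by norm_cast; positivity)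
  linear_combination (t ! : ℂ) * hchoose - hprod +
    (-1) ^ s * gbinom (-t - 1 / 2) s * s ! * (2 * t)! * (t + s)! * hfour

lemma sum_range_gbinom_mul_sum_range_gbinom (x w : ℂ) (i : ℕ) :
    ∑ j ∈ range (i + 1), gbinom x (i - j) *
        ∑ t ∈ range (j + 1), gbinom (-t - 1 / 2) (j - t) * w ^ t / t ! =
      ∑ t ∈ range (i + 1), gbinom (x - t - 1 / 2) (i - t) * w ^ t / t ! := by
  simp_rw [mul_sum, range_eq_Ico]
  rw [← sum_Ico_Ico_comm]
  refine sum_congr rfl fun t ht => ?_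
  have hti : t ≤ i := Nat.lt_succ_iff.mp (mem_Ico.mp ht).2
  rw [sum_Ico_eq_sum_range, show i + 1 - t = i - t + 1 by omega,
    show x - t - 1 / 2 = (-t - 1 / 2) + x by ring, ← sum_range_gbinom_mul_gbinom, mul_div_assoc,
    sum_mul]
  refine sum_congr rfl fun s _ => ?_
  rw [show t + s - t = s by omega, show i - (t + s) = i - t - s by omega]
  ring

lemma neg_one_pow_mul_lag (i : ℕ) (α w : ℂ) :
    (-1) ^ i * lag i (-i - α - 1 / 2) w =
      ∑ t ∈ range (i + 1), gbinom (i + α - t - 1 / 2) (i - t) * w ^ t / t ! := by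
  rw [lag, mul_sum]
  refine sum_congr rfl fun t ht => ?_
  have hti : t ≤ i := Nat.lt_succ_iff.mp (mem_range.mp ht)
  have hsign : (-1 : ℂ) ^ i * (-1) ^ t * (-1) ^ (i - t) = 1 := by
    rw [← pow_add, ← pow_add, show i + t + (i - t) = 2 * i by omega, pow_mul]
    norm_num
  rw [show (i : ℂ) + (-i - α - 1 / 2) = -(α + 1 / 2) by ring, gbinom_neg, Nat.cast_sub hti,
    show α + 1 / 2 + ((i : ℂ) - t) - 1 = i + α - t - 1 / 2 by ring]
  linear_combination (gbinom (i + α - t - 1 / 2) (i - t) * w ^ t / t !) * hsign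

lemma aeval_hermite_two_mul {R : Type*} [CommRing R] (j : ℕ) (x : R) :
    aeval x (hermite (2 * j)) = ∑ t ∈ range (j + 1),
      (-1) ^ (j - t) * (2 * (j - t) - 1)‼ * (2 * j).choose (2 * t) * x ^ (2 * t) := by
  have hsub : (range (j + 1)).image (2 * ·) ⊆ range (2 * j + 1) := by
    intro m hm
    obtain ⟨t, ht, rfl⟩ := mem_image.1 hm
    rw [mem_range] at ht ⊢
    omega
  have hodd : ∀ m ∈ range (2 * j + 1), m ∉ (range (j + 1)).image (2 * ·) →
      (hermite (2 * j)).coeff m • x ^ m = 0 := by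
    intro m hm hme
    rcases Nat.even_or_odd m with ⟨t, rfl⟩ | hodd
    · refine absurd (mem_image.2 ⟨t, mem_range.2 ?_, by ring⟩) hme
      rw [mem_range] at hm
      omega
    · rw [coeff_hermite_of_odd_add ((even_two_mul j).add_odd hodd), zero_smul]
  rw [aeval_eq_sum_range, natDegree_hermite, ← sum_subset hsub hodd,
    sum_image fun a _ b _ h => Nat.eq_of_mul_eq_mul_left two_pos h]
  refine sum_congr rfl fun t ht => ?_
  have htj : t ≤ j := Nat.lt_succ_iff.mp (mem_range.mp ht)
  rw [coeff_hermite_of_even_add (by rw [← mul_add]; exact even_two_mul _),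
    show 2 * j - 2 * t = 2 * (j - t) by omega, Nat.mul_div_cancel_left _ two_pos, zsmul_eq_mul]
  push_cast
  ring

section

variable {E : Type*} [NormedAddCommGroup E] [NormedSpace ℂ E]

lemma fourier_sum_smul {V : Type*} [NormedAddCommGroup V] [InnerProductSpace ℝ V]
    [FiniteDimensional ℝ V] [MeasurableSpace V] [BorelSpace V] {ι : Type*} (s : Finset ι)
    (c : ι → ℂ) {f : ι → V → E} (hf : ∀ j ∈ s, Integrable (f j)) (w : V) :
    𝓕 (fun v => ∑ j ∈ s, c j • f j v) w = ∑ j ∈ s, c j • 𝓕 (f j) w := by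
  simp_rw [fourier_eq, smul_sum, smul_comm _ (c _)]
  rw [integral_finsetSum]
  · simp_rw [integral_smul]
  · exact fun j hj => ((fourierIntegral_convergent_iff w).2 (hf j hj)).smul (c j)

lemma fourier_pow_smul {f : ℝ → E} {n : ℕ} (hf : ∀ m ≤ n, Integrable (fun x => x ^ m • f x))
    (k : ℝ) :
    𝓕 (fun x : ℝ => (x : ℂ) ^ n • f x) k = ((-2 * π * I) ^ n)⁻¹ • iteratedDeriv n (𝓕 f) k := by
  have hc : (-2 * π * I : ℂ) ^ n ≠ 0 := pow_ne_zero n (by simp [pi_ne_zero])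
  rw [Real.iteratedDeriv_fourier (N := n) (fun m hm => hf m (by exact_mod_cast hm)) le_rfl,
    Real.fourier_real_eq, Real.fourier_real_eq, ← integral_smul]
  congr 1 with x
  rw [mul_pow (-2 * π * I : ℂ), mul_smul, smul_comm (𝐞 _) ((-2 * π * I : ℂ) ^ n),
    inv_smul_smul₀ hc]

end

lemma integrable_pow_smul_cexp_neg_pi_mul_sq (m : ℕ) :
    Integrable (fun x : ℝ => x ^ m • Complex.exp (-π * x ^ 2)) := by
  have hm : (-1 : ℝ) < m := by linarith [(m.cast_nonneg : (0 : ℝ) ≤ m)]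
  refine ((integrable_rpow_mul_exp_neg_mul_sq pi_pos hm).ofReal (𝕜 := ℂ)).congr
    (Filter.Eventually.of_forall fun x => ?_)
  simp [Real.rpow_natCast, Complex.ofReal_exp, Complex.real_smul]

lemma fourier_cexp_neg_pi_mul_sq :
    𝓕 (fun x : ℝ => Complex.exp (-π * x ^ 2)) = fun k : ℝ => Complex.exp (-π * k ^ 2) := by
  simpa using fourier_gaussian_pi (b := 1) (by simp)

lemma iteratedDeriv_ofReal_comp (n : ℕ) (h : ℝ → ℝ) :
    iteratedDeriv n (fun x => ((h x : ℝ) : ℂ)) =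
      fun x => ((iteratedDeriv n h x : ℝ) : ℂ) := by
  induction n with
  | zero => simp
  | succ n ih =>
    funext x
    rw [iteratedDeriv_succ, ih, iteratedDeriv_succ]
    by_cases hd : DifferentiableAt ℝ (iteratedDeriv n h) x
    · exact hd.hasDerivAt.ofReal_comp.deriv
    · rw [deriv_zero_of_not_differentiableAt hd, deriv_zero_of_not_differentiableAt,
        Complex.ofReal_zero]
      intro hc
      have hre : DifferentiableAt ℝ (fun y => Complex.re ((iteratedDeriv n h y : ℝ) : ℂ)) x :=
        Complex.reCLM.differentiableAt.comp x hc
      exact hd (by simpa using hre)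

lemma iteratedDeriv_exp_neg_pi_mul_sq (n : ℕ) (x : ℝ) :
    iteratedDeriv n (fun x : ℝ => Real.exp (-π * x ^ 2)) x =
      (-√(2 * π)) ^ n * aeval (√(2 * π) * x) (hermite n) * Real.exp (-π * x ^ 2) := by
  have hsq : √(2 * π) ^ 2 = 2 * π := sq_sqrt (by positivity)
  have hcomp : (fun x : ℝ => Real.exp (-π * x ^ 2)) =
      fun x => (fun y => Real.exp (-(y ^ 2 / 2))) (√(2 * π) * x) := by
    funext x
    beta_reduce
    rw [mul_pow, hsq]
    ring_nf
  have hsmooth : ContDiff ℝ n (fun y : ℝ => Real.exp (-(y ^ 2 / 2))) := by fun_prop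
  rw [hcomp, iteratedDeriv_comp_const_mul hsmooth, iteratedDeriv_eq_iterate]
  beta_reduce
  rw [deriv_gaussian_eq_hermite_mul_gaussian, mul_pow, hsq, neg_pow]
  ring_nf

lemma fourier_pow_mul_cexp_neg_pi_mul_sq (n : ℕ) (k : ℝ) :
    𝓕 (fun x : ℝ => (x : ℂ) ^ n * Complex.exp (-π * x ^ 2)) k =
      (-I / √(2 * π)) ^ n * aeval ((√(2 * π) * k : ℝ) : ℂ) (hermite n) *
        Complex.exp (-π * k ^ 2) := by
  have hreal : (fun x : ℝ => Complex.exp (-π * x ^ 2)) =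
      fun x => (Real.exp (-π * x ^ 2) : ℂ) := by
    funext x
    push_cast
    rfl
  have hsq : (√(2 * π) : ℂ) ^ 2 = 2 * π := by
    exact_mod_cast sq_sqrt (by positivity : 0 ≤ 2 * π)
  have hI : ((-2 * π * I : ℂ) ^ n)⁻¹ * (-√(2 * π) : ℂ) ^ n = (-I / √(2 * π)) ^ n := by
    rw [← inv_pow, ← mul_pow]
    congr 1
    field_simp
    linear_combination hsq + (2 * π : ℂ) * Complex.I_sq
  simp_rw [← smul_eq_mul (a := ((_ : ℝ) : ℂ) ^ n)]
  rw [fourier_pow_smul fun m _ => integrable_pow_smul_cexp_neg_pi_mul_sq m,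
    fourier_cexp_neg_pi_mul_sq, hreal, iteratedDeriv_ofReal_comp]
  beta_reduce
  rw [iteratedDeriv_exp_neg_pi_mul_sq, smul_eq_mul, ← hI]
  have hherm : aeval ((√(2 * π) * k : ℝ) : ℂ) (hermite n) =
      (aeval (√(2 * π) * k) (hermite n) : ℂ) :=
    aeval_algebraMap_apply ℂ (√(2 * π) * k) (hermite n)
  rw [hherm]
  push_cast
  ring

lemma pi_pow_div_factorial_mul_fourier_pow_two_mul_mul_cexp_neg_pi_mul_sq (j : ℕ) (k : ℝ) :
    (π : ℂ) ^ j / j ! * 𝓕 (fun x : ℝ => (x : ℂ) ^ (2 * j) * Complex.exp (-π * x ^ 2)) k =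
      (-1) ^ j * Complex.exp (-π * k ^ 2) *
        ∑ t ∈ range (j + 1), gbinom (-t - 1 / 2) (j - t) * (π * k ^ 2) ^ t / t ! := by
  have hsq : ((√(2 * π) : ℝ) : ℂ) ^ 2 = 2 * π := by
    exact_mod_cast sq_sqrt (by positivity : 0 ≤ 2 * π)
  have hI : (-I / √(2 * π)) ^ (2 * j) = (-1) ^ j / (2 * π) ^ j := by
    rw [pow_mul, div_pow, neg_sq, Complex.I_sq, hsq, div_pow]
  rw [fourier_pow_mul_cexp_neg_pi_mul_sq, aeval_hermite_two_mul, hI, mul_sum, sum_mul, mul_sum,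
    mul_sum]
  refine sum_congr rfl fun t ht => ?_
  obtain ⟨s, rfl⟩ := Nat.exists_eq_add_of_le (Nat.lt_succ_iff.mp (mem_range.mp ht))
  have hcoef := doubleFactorial_mul_choose_div t s
  have hsign : (-1 : ℂ) ^ s * (-1) ^ s = 1 := by rw [← mul_pow]; norm_num
  have hpow : (((√(2 * π) * k : ℝ) : ℂ)) ^ (2 * t) = (2 * π) ^ t * (k ^ 2) ^ t := by
    rw [pow_mul, Complex.ofReal_mul, mul_pow, hsq, mul_pow]
  have hg : gbinom (-t - 1 / 2) s / t ! =
      (-1) ^ s * ((2 * s - 1)‼ * (2 * (t + s)).choose (2 * t) / (2 ^ s * (t + s)!)) := by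
    rw [hcoef]
    linear_combination (-(gbinom (-t - 1 / 2) s / t !)) * hsign
  rw [Nat.add_sub_cancel_left, hpow, mul_div_right_comm, hg]
  field_simp
  ring

lemma exp_mul_lag_eq_sum (i : ℕ) (α : ℂ) (z : ℝ) :
    (Real.exp (-(π * z ^ 2)) : ℂ) * lag i α (π * z ^ 2) =
      ∑ j ∈ range (i + 1), ((-1) ^ j * gbinom (i + α) (i - j) * π ^ j / j !) •
        ((z : ℂ) ^ (2 * j) * Complex.exp (-π * z ^ 2)) := by
  rw [lag, mul_sum]
  refine sum_congr rfl fun j _ => ?_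
  push_cast
  rw [smul_eq_mul, neg_mul]
  ring

theorem fourier_gaussian_laguerre (i : ℕ) (α : ℂ) (k : ℝ) :
    ∫ z : ℝ, Real.exp (-(Real.pi * z ^ 2)) * lag i α (Real.pi * z ^ 2) *
        Complex.exp (-(2 * Real.pi * Complex.I * k * z)) =
      (-1 : ℂ) ^ i * Real.exp (-(Real.pi * k ^ 2)) *
        lag i (-(i : ℂ) - α - 1 / 2) (Real.pi * k ^ 2) := by
  have hint (j : ℕ) :
      Integrable (fun z : ℝ => (z : ℂ) ^ (2 * j) * Complex.exp (-π * z ^ 2)) := by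
    simpa only [Complex.real_smul, Complex.ofReal_pow] using
      integrable_pow_smul_cexp_neg_pi_mul_sq (2 * j)
  calc _ = 𝓕 (fun z : ℝ => (Real.exp (-(π * z ^ 2)) : ℂ) * lag i α (π * z ^ 2)) k := by
        rw [fourier_real_eq_integral_exp_smul]
        congr 1 with z
        push_cast
        ring_nf
    _ = ∑ j ∈ range (i + 1), (-1) ^ j * gbinom (i + α) (i - j) * ((π : ℂ) ^ j / j ! *
          𝓕 (fun x : ℝ => (x : ℂ) ^ (2 * j) * Complex.exp (-π * x ^ 2)) k) := by
        simp_rw [exp_mul_lag_eq_sum]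
        rw [fourier_sum_smul _ _ fun j _ => hint j]
        exact sum_congr rfl fun j _ => by rw [smul_eq_mul]; ring
    _ = Complex.exp (-π * k ^ 2) * ∑ j ∈ range (i + 1), gbinom (i + α) (i - j) *
          ∑ t ∈ range (j + 1), gbinom (-t - 1 / 2) (j - t) * (π * k ^ 2) ^ t / t ! := by
        simp_rw [pi_pow_div_factorial_mul_fourier_pow_two_mul_mul_cexp_neg_pi_mul_sq, mul_sum]
        refine sum_congr rfl fun j _ => sum_congr rfl fun t _ => ?_
        have hsign : (-1 : ℂ) ^ j * (-1) ^ j = 1 := by rw [← mul_pow]; norm_num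
        linear_combination (Complex.exp (-π * k ^ 2) * gbinom (i + α) (i - j) *
          (gbinom (-t - 1 / 2) (j - t) * (π * k ^ 2) ^ t / t !)) * hsign
    _ = _ := by
        rw [sum_range_gbinom_mul_sum_range_gbinom, ← neg_one_pow_mul_lag]
        push_cast
        rw [neg_mul]
        ring
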